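/- If a finite simple graph G is positive, then for every n ≥ |V(G)| there exists an even homomorphism f : G → K_n (where K_n is the complete graph on n vertices) such that |f(V(G))| ≥ |V(G)|/2. -/

import Mathlib

open MeasureTheory

noncomputable section

/-- The unit interval `[0,1]` as a measure space. -/
abbrev UI : Type := Set.Icc (0:ℝ) 1

/-- A kernel is a symmetric bounded measurable function `[0,1]² → ℝ`. -/
def IsKernel (W : UI → UI → ℝ) : Prop :=
  Measurable (Function.uncurry W) ∧ (∀ x y, W x y = W y x) ∧ ∃ C : ℝ, ∀ x y, |W x y| ≤ C

open scoped Classical in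
/-- The homomorphism density `t(G,W) = ∫_{[0,1]^V} ∏_{(a,b)∈E} W(p(a),p(b)) dp`. -/
noncomputable def homDensity {V : Type} [Fintype V] (G : SimpleGraph V) (W : UI → UI → ℝ) : ℝ :=
  ∫ p : V → UI, ∏ e ∈ G.edgeFinset, W (p (Quot.out e).1) (p (Quot.out e).2)

/-- A graph is positive if `t(G,W) ≥ 0` for every kernel `W`. -/
def Positive {V : Type} [Fintype V] (G : SimpleGraph V) : Prop :=
  ∀ W : UI → UI → ℝ, IsKernel W → 0 ≤ homDensity G W


open scoped Classical in
/-- A graph homomorphism `f : G → H` is even if for every edge `e` of `H`, the number of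
edges of `G` mapped by `f` onto `e` is even. -/
def IsEvenHom {V V' : Type} [Fintype V] [Fintype V'] {G : SimpleGraph V} {H : SimpleGraph V'}
    (f : G →g H) : Prop :=
  ∀ e ∈ H.edgeFinset, Even ((G.edgeFinset.filter (fun e' => Sym2.map (⇑f) e' = e)).card)

/-!
Let `W_σ` be the kernel that is constant on the blocks of an equipartition of `[0,1]` into `m`
intervals, with value `±1` (read off a sign pattern `σ`) on off-diagonal pairs of blocks and `0`
on diagonal ones. Then `m^v t(G, W_σ) = ∑_{f proper} ∏_{e} σ(f e)` is, as a function of `σ`, a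
Walsh polynomial of degree at most `|E(G)|`: its mean over `σ` counts the even proper maps
`V → [m]` and its second moment is at least the number of all proper maps. Positivity of `G`
makes it nonnegative, and for a nonnegative polynomial of degree `d` Bonami's hypercontractive
inequality together with Hölder gives `E[T²] ≤ 9^d E[T]²`, so `#proper ≤ 9^d #even²`. Since
`#proper ≥ m(m-1)⋯(m-v+1)`, while maps whose image has fewer than `v/2` points number only
`O(m^((v-1)/2))`, for large `m` some even proper map has an image of at least `v/2` points; it is
then relabelled injectively into `K_n`.
-/

open Finset

def boolSign (b : Bool) : ℝ := if b then 1 else -1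

lemma boolSign_sq (b : Bool) : boolSign b ^ 2 = 1 := by
  cases b <;> norm_num [boolSign]

lemma boolSign_not (b : Bool) : boolSign (!b) = -boolSign b := by
  cases b <;> norm_num [boolSign]

lemma abs_boolSign (b : Bool) : |boolSign b| = 1 := by
  cases b <;> norm_num [boolSign]

lemma boolSign_pow (b : Bool) (k : ℕ) : boolSign b ^ k = if Odd k then boolSign b else 1 := by
  split_ifs with hk
  · obtain ⟨j, rfl⟩ := hk
    rw [pow_succ, pow_mul, boolSign_sq, one_pow, one_mul]
  · obtain ⟨j, rfl⟩ := Nat.not_odd_iff_even.1 hk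
    rw [← two_mul, pow_mul, boolSign_sq, one_pow]

lemma bonami_step_ineq {N K A B α β γ : ℝ} (hN : 0 ≤ N) (hK : 0 ≤ K) (hA : 0 ≤ A)
    (hB : 0 ≤ B) (hβ₀ : 0 ≤ β) (hγ₀ : 0 ≤ γ) (hα : N * α ≤ 9 * K * A ^ 2)
    (hγ : N * γ ≤ K * B ^ 2) (hβ : β ^ 2 ≤ α * γ) :
    N * (α + 6 * β + γ) ≤ 9 * K * (A + B) ^ 2 := by
  have hNβ : N * β ≤ 3 * K * A * B := by
    refine (pow_le_pow_iff_left₀ (by positivity) (by positivity) two_ne_zero).1 ?_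
    calc (N * β) ^ 2 ≤ N ^ 2 * (α * γ) := by rw [mul_pow]; gcongr
      _ = N * α * (N * γ) := by ring
      _ ≤ 9 * K * A ^ 2 * (K * B ^ 2) := mul_le_mul hα hγ (by positivity) (by positivity)
      _ = (3 * K * A * B) ^ 2 := by ring
  nlinarith [mul_nonneg hK (sq_nonneg B)]

/-- For `T ≥ 0`, two Cauchy–Schwarz steps give `(∑ T²)³ ≤ (∑ T)² ∑ T⁴`. -/
lemma mul_sum_sq_le_of_mul_sum_pow_four_le {ι : Type*} (s : Finset ι) {T : ι → ℝ}
    (hT : ∀ i ∈ s, 0 ≤ T i) {N K : ℝ} (hN : 0 ≤ N) (hK : 0 ≤ K)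
    (h : N * ∑ i ∈ s, T i ^ 4 ≤ K * (∑ i ∈ s, T i ^ 2) ^ 2) :
    N * ∑ i ∈ s, T i ^ 2 ≤ K * (∑ i ∈ s, T i) ^ 2 := by
  set X := ∑ i ∈ s, T i
  set Y := ∑ i ∈ s, T i ^ 2
  set Z := ∑ i ∈ s, T i ^ 4
  have hX : 0 ≤ X := sum_nonneg hT
  have hXY : Y ^ 2 ≤ X * ∑ i ∈ s, T i ^ 3 := sum_sq_le_sum_mul_sum_of_sq_le_mul s hT
    (fun i hi => pow_nonneg (hT i hi) 3) fun i _ => le_of_eq (by ring)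
  have hYZ : (∑ i ∈ s, T i ^ 3) ^ 2 ≤ Y * Z := sum_sq_le_sum_mul_sum_of_sq_le_mul s
    (fun i _ => sq_nonneg (T i)) (fun i _ => by positivity) fun i _ => le_of_eq (by ring)
  rcases (sum_nonneg fun i _ => sq_nonneg (T i) : 0 ≤ Y).eq_or_lt with hY | hY
  · rw [show Y = 0 from hY.symm, mul_zero]
    positivity
  · have hY4 : Y ^ 4 ≤ X ^ 2 * (Y * Z) := calc
      Y ^ 4 = (Y ^ 2) ^ 2 := by ring
      _ ≤ (X * ∑ i ∈ s, T i ^ 3) ^ 2 := pow_le_pow_left₀ (sq_nonneg Y) hXY 2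
      _ = X ^ 2 * (∑ i ∈ s, T i ^ 3) ^ 2 := by ring
      _ ≤ X ^ 2 * (Y * Z) := mul_le_mul_of_nonneg_left hYZ (sq_nonneg X)
    refine le_of_mul_le_mul_right ?_ (pow_pos hY 3)
    calc N * Y * Y ^ 3 = N * Y ^ 4 := by ring
      _ ≤ N * (X ^ 2 * (Y * Z)) := mul_le_mul_of_nonneg_left hY4 hN
      _ = X ^ 2 * Y * (N * Z) := by ring
      _ ≤ X ^ 2 * Y * (K * Y ^ 2) := mul_le_mul_of_nonneg_left h (by positivity)
      _ = K * X ^ 2 * Y ^ 3 := by ring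

section BooleanCube

variable {I : Type*}

def walsh (S : Finset I) (σ : I → Bool) : ℝ := ∏ i ∈ S, boolSign (σ i)

lemma walsh_sq (S : Finset I) (σ : I → Bool) : walsh S σ ^ 2 = 1 := by
  simp [walsh, ← prod_pow, boolSign_sq]

variable [DecidableEq I]

def flipAt (i : I) : Equiv.Perm (I → Bool) :=
  Function.Involutive.toPerm (fun σ => Function.update σ i (!σ i)) fun σ => by
    ext j
    by_cases h : j = i
    · subst h; simp
    · simp [h]

lemma flipAt_apply_self (i : I) (σ : I → Bool) : flipAt i σ i = !σ i :=
  Function.update_self ..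

lemma flipAt_apply_of_ne {i j : I} (h : j ≠ i) (σ : I → Bool) : flipAt i σ j = σ j :=
  Function.update_of_ne h ..

lemma walsh_insert {i : I} {S : Finset I} (h : i ∉ S) (σ : I → Bool) :
    walsh (insert i S) σ = boolSign (σ i) * walsh S σ :=
  prod_insert h

lemma walsh_flipAt {i : I} {S : Finset I} (h : i ∉ S) (σ : I → Bool) :
    walsh S (flipAt i σ) = walsh S σ :=
  prod_congr rfl fun j hj => by rw [flipAt_apply_of_ne (ne_of_mem_of_not_mem hj h)]

lemma walsh_mul_walsh (S T : Finset I) (σ : I → Bool) :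
    walsh S σ * walsh T σ = walsh (symmDiff S T) σ := by
  calc walsh S σ * walsh T σ = walsh (S ∪ T) σ * walsh (S ∩ T) σ := prod_union_inter.symm
    _ = walsh (symmDiff S T) σ * walsh (S ∩ T) σ ^ 2 := by
      rw [symmDiff_eq_sup_sdiff_inf, walsh, ← prod_sdiff (inter_subset_union (s := S))]
      simp only [walsh, sup_eq_union, inf_eq_inter]; ring
    _ = walsh (symmDiff S T) σ := by rw [walsh_sq, mul_one]

def walshSum (s : Finset I) (a : Finset I → ℝ) (σ : I → Bool) : ℝ :=
  ∑ S ∈ s.powerset, a S * walsh S σ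

lemma walshSum_insert {i : I} {s : Finset I} (hi : i ∉ s) (a : Finset I → ℝ)
    (σ : I → Bool) :
    walshSum (insert i s) a σ =
      walshSum s a σ + boolSign (σ i) * walshSum s (fun S => a (insert i S)) σ := by
  rw [walshSum, sum_powerset_insert hi, walshSum, walshSum, mul_sum]
  congr 1
  refine sum_congr rfl fun S hS => ?_
  rw [walsh_insert (notMem_mono (mem_powerset.1 hS) hi)]
  ring

lemma walshSum_flipAt {i : I} {s : Finset I} (hi : i ∉ s) (a : Finset I → ℝ)
    (σ : I → Bool) :
    walshSum s a (flipAt i σ) = walshSum s a σ :=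
  sum_congr rfl fun S hS => by rw [walsh_flipAt (notMem_mono (mem_powerset.1 hS) hi)]

variable [Fintype I]

lemma sum_boolSign_mul_eq_zero (i : I) {w : (I → Bool) → ℝ}
    (hw : ∀ σ, w (flipAt i σ) = w σ) : ∑ σ, boolSign (σ i) * w σ = 0 := by
  have h := Equiv.sum_comp (flipAt i) fun σ => boolSign (σ i) * w σ
  simp only [flipAt_apply_self, boolSign_not, hw, neg_mul, sum_neg_distrib] at h
  linarith

lemma sum_walsh (S : Finset I) :
    ∑ σ, walsh S σ = if S = ∅ then 2 ^ Fintype.card I else 0 := by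
  split_ifs with hS
  · simp [hS, walsh]
  · obtain ⟨i, hi⟩ := nonempty_iff_ne_empty.2 hS
    rw [← insert_erase hi]
    simp only [walsh_insert (notMem_erase i S)]
    exact sum_boolSign_mul_eq_zero i (walsh_flipAt (notMem_erase i S))

lemma sum_walsh_mul_walsh (S T : Finset I) :
    ∑ σ, walsh S σ * walsh T σ = if S = T then 2 ^ Fintype.card I else 0 := by
  simp only [walsh_mul_walsh, sum_walsh, ← bot_eq_empty, symmDiff_eq_bot]

section Moments

variable {i : I} {u v : (I → Bool) → ℝ}

lemma sum_sq_add_boolSign_mul (hu : ∀ σ, u (flipAt i σ) = u σ)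
    (hv : ∀ σ, v (flipAt i σ) = v σ) :
    ∑ σ, (u σ + boolSign (σ i) * v σ) ^ 2 = ∑ σ, u σ ^ 2 + ∑ σ, v σ ^ 2 := by
  have hcross := sum_boolSign_mul_eq_zero i (w := fun σ => 2 * (u σ * v σ))
    fun σ => by simp only [hu, hv]
  rw [← sum_add_distrib, ← sub_eq_zero, ← sum_sub_distrib, ← hcross]
  refine sum_congr rfl fun σ _ => ?_
  linear_combination v σ ^ 2 * boolSign_sq (σ i)

lemma sum_pow_four_add_boolSign_mul (hu : ∀ σ, u (flipAt i σ) = u σ)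
    (hv : ∀ σ, v (flipAt i σ) = v σ) :
    ∑ σ, (u σ + boolSign (σ i) * v σ) ^ 4 =
      ∑ σ, u σ ^ 4 + 6 * ∑ σ, u σ ^ 2 * v σ ^ 2 + ∑ σ, v σ ^ 4 := by
  have hcross := sum_boolSign_mul_eq_zero i
    (w := fun σ => 4 * (u σ ^ 3 * v σ + u σ * v σ ^ 3)) fun σ => by simp only [hu, hv]
  rw [mul_sum, ← sum_add_distrib, ← sum_add_distrib, ← sub_eq_zero, ← sum_sub_distrib,
    ← hcross]
  refine sum_congr rfl fun σ _ => ?_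
  linear_combination (6 * u σ ^ 2 * v σ ^ 2 + 4 * boolSign (σ i) * u σ * v σ ^ 3 +
    (boolSign (σ i) ^ 2 + 1) * v σ ^ 4) * boolSign_sq (σ i)

end Moments

end BooleanCube

theorem bonami {I : Type*} [Fintype I] [DecidableEq I] (s : Finset I) (d : ℕ)
    (a : Finset I → ℝ) (ha : ∀ S ⊆ s, d < S.card → a S = 0) :
    2 ^ Fintype.card I * ∑ σ, walshSum s a σ ^ 4 ≤ 9 ^ d * (∑ σ, walshSum s a σ ^ 2) ^ 2 := by
  induction s using Finset.induction_on generalizing d a with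
  | empty =>
    simp only [walshSum, powerset_empty, sum_singleton, walsh, prod_empty, mul_one, sum_const,
      card_univ, Fintype.card_fun, Fintype.card_bool, nsmul_eq_mul, Nat.cast_pow, Nat.cast_ofNat]
    have : (1 : ℝ) ≤ 9 ^ d := one_le_pow₀ (by norm_num)
    nlinarith [pow_nonneg (sq_nonneg (2 ^ Fintype.card I * a ∅ ^ 2)) 1]
  | @insert i s hi ih =>
    have hu := ih d a fun S hS => ha S (hS.trans (subset_insert i s))
    have ha' : ∀ S ⊆ s, d < S.card + 1 → a (insert i S) = 0 := fun S hS hd =>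
      ha _ (insert_subset_insert i hS) (by rwa [card_insert_of_notMem (notMem_mono hS hi)])
    simp only [walshSum_insert hi]
    cases d with
    | zero =>
      have hv : ∀ σ, walshSum s (fun S => a (insert i S)) σ = 0 := fun σ =>
        sum_eq_zero fun S hS => by simp [ha' S (mem_powerset.1 hS) (Nat.succ_pos _)]
      simpa only [hv, mul_zero, add_zero] using hu
    | succ d =>
      have hv := ih d (fun S => a (insert i S)) fun S hS hd => ha' S hS (by omega)
      rw [sum_sq_add_boolSign_mul (walshSum_flipAt hi _) (walshSum_flipAt hi _),
        sum_pow_four_add_boolSign_mul (walshSum_flipAt hi _) (walshSum_flipAt hi _), pow_succ']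
      refine bonami_step_ineq (by positivity) (by positivity) (by positivity) (by positivity)
        (by positivity) (by positivity) (pow_succ' (9 : ℝ) d ▸ hu) hv ?_
      exact sum_sq_le_sum_mul_sum_of_sq_le_mul univ (fun σ _ => by positivity)
        (fun σ _ => by positivity) fun σ _ => le_of_eq (by ring)

section SignedHomCount

variable {V α : Type*} [Fintype α] [DecidableEq α] (E : Finset (Sym2 V))

def edgeMult (f : V → α) (ε : Sym2 α) : ℕ := #{e ∈ E | e.map f = ε}

def oddEdges (f : V → α) : Finset (Sym2 α) := {ε | Odd (edgeMult E f ε)}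

/-- Vanishes on the diagonal so that only proper maps contribute to `signedHomCount`. -/
def signedEdge (σ : Sym2 α → Bool) (ε : Sym2 α) : ℝ :=
  if ε.IsDiag then 0 else boolSign (σ ε)

lemma card_oddEdges_le (f : V → α) : #(oddEdges E f) ≤ #E := by
  refine (card_le_card fun ε hε => ?_).trans (card_image_le (s := E) (f := Sym2.map f))
  obtain ⟨e, he⟩ := card_pos.1 (mem_filter.1 hε).2.pos
  exact mem_image.2 ⟨e, (mem_filter.1 he).1, (mem_filter.1 he).2⟩

variable [Fintype V] [DecidableEq V]

variable (α) in
def properMaps : Finset (V → α) := {f | ∀ e ∈ E, ¬ (e.map f).IsDiag}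

variable (α) in
def evenMaps : Finset (V → α) := {f ∈ properMaps α E | oddEdges E f = ∅}

def signedHomCount (σ : Sym2 α → Bool) : ℝ := ∑ f : V → α, ∏ e ∈ E, signedEdge σ (e.map f)

lemma prod_signedEdge_of_mem_properMaps {f : V → α} (hf : f ∈ properMaps α E)
    (σ : Sym2 α → Bool) : ∏ e ∈ E, signedEdge σ (e.map f) = walsh (oddEdges E f) σ := by
  calc ∏ e ∈ E, signedEdge σ (e.map f) = ∏ e ∈ E, boolSign (σ (e.map f)) :=
        prod_congr rfl fun e he => if_neg ((mem_filter.1 hf).2 e he)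
    _ = ∏ ε, boolSign (σ ε) ^ edgeMult E f ε := by
        rw [← prod_fiberwise_of_maps_to (g := Sym2.map f) (t := univ) fun _ _ => mem_univ _]
        refine prod_congr rfl fun ε _ => ?_
        rw [prod_congr rfl fun e he => by rw [(mem_filter.1 he).2], prod_const]
        rfl
    _ = walsh (oddEdges E f) σ := by simp only [boolSign_pow, walsh, oddEdges, prod_filter]

lemma prod_signedEdge_of_notMem_properMaps {f : V → α} (hf : f ∉ properMaps α E)
    (σ : Sym2 α → Bool) : ∏ e ∈ E, signedEdge σ (e.map f) = 0 := by
  obtain ⟨e, he, hdiag⟩ : ∃ e ∈ E, (e.map f).IsDiag := by simpa [properMaps] using hf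
  exact prod_eq_zero he (if_pos hdiag)

lemma signedHomCount_eq_sum_walsh (σ : Sym2 α → Bool) :
    signedHomCount E σ = ∑ f ∈ properMaps α E, walsh (oddEdges E f) σ := by
  rw [signedHomCount, ← sum_subset (subset_univ (properMaps α E))
    fun f _ hf => prod_signedEdge_of_notMem_properMaps E hf σ]
  exact sum_congr rfl fun f hf => prod_signedEdge_of_mem_properMaps E hf σ

lemma signedHomCount_eq_walshSum (σ : Sym2 α → Bool) :
    signedHomCount E σ =
      walshSum univ (fun S => #{f ∈ properMaps α E | oddEdges E f = S}) σ := by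
  rw [signedHomCount_eq_sum_walsh, walshSum, powerset_univ,
    ← sum_fiberwise_of_maps_to (g := oddEdges E) (t := univ) fun _ _ => mem_univ _]
  refine sum_congr rfl fun S _ => ?_
  rw [sum_congr rfl fun f hf => by rw [(mem_filter.1 hf).2], sum_const, nsmul_eq_mul]

lemma sum_signedHomCount :
    ∑ σ : Sym2 α → Bool, signedHomCount E σ =
      2 ^ Fintype.card (Sym2 α) * #(evenMaps α E) := by
  simp only [signedHomCount_eq_sum_walsh]
  rw [sum_comm]
  simp only [sum_walsh, sum_ite, sum_const_zero, add_zero, sum_const, nsmul_eq_mul, evenMaps]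
  ring

lemma card_properMaps_le_sum_sq :
    2 ^ Fintype.card (Sym2 α) * #(properMaps α E) ≤
      ∑ σ : Sym2 α → Bool, signedHomCount E σ ^ 2 := by
  have hdiag : ∀ f ∈ properMaps α E, (2 : ℝ) ^ Fintype.card (Sym2 α) ≤
      ∑ g ∈ properMaps α E, ∑ σ, walsh (oddEdges E f) σ * walsh (oddEdges E g) σ := by
    intro f hf
    simp only [sum_walsh_mul_walsh]
    calc (2 : ℝ) ^ Fintype.card (Sym2 α) =
          if oddEdges E f = oddEdges E f then 2 ^ Fintype.card (Sym2 α) else 0 :=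
          (if_pos rfl).symm
      _ ≤ _ := single_le_sum (f := fun g =>
          if oddEdges E f = oddEdges E g then (2 : ℝ) ^ Fintype.card (Sym2 α) else 0)
          (fun g _ => by positivity) hf
  calc 2 ^ Fintype.card (Sym2 α) * #(properMaps α E)
      = ∑ f ∈ properMaps α E, (2 : ℝ) ^ Fintype.card (Sym2 α) := by
        rw [sum_const, nsmul_eq_mul, mul_comm]
    _ ≤ _ := sum_le_sum hdiag
    _ = ∑ σ : Sym2 α → Bool, signedHomCount E σ ^ 2 := by
        simp only [signedHomCount_eq_sum_walsh, sq, sum_mul_sum]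
        exact (sum_comm.trans (sum_congr rfl fun f _ => sum_comm)).symm

theorem card_properMaps_le (hT : ∀ σ : Sym2 α → Bool, 0 ≤ signedHomCount E σ) :
    #(properMaps α E) ≤ 9 ^ #E * #(evenMaps α E) ^ 2 := by
  set N : ℝ := 2 ^ Fintype.card (Sym2 α)
  have hbonami : N * ∑ σ : Sym2 α → Bool, signedHomCount E σ ^ 4 ≤
      9 ^ #E * (∑ σ : Sym2 α → Bool, signedHomCount E σ ^ 2) ^ 2 := by
    simp only [signedHomCount_eq_walshSum]
    refine bonami univ #E _ fun S _ hS => ?_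
    simp only [Nat.cast_eq_zero, card_eq_zero, filter_eq_empty_iff]
    exact fun f _ hf => (card_oddEdges_le E f).not_gt (hf ▸ hS)
  have h := mul_sum_sq_le_of_mul_sum_pow_four_le univ (fun σ _ => hT σ) (by positivity)
    (by positivity) hbonami
  rw [sum_signedHomCount] at h
  have hN : 0 < N := by positivity
  have : N ^ 2 * #(properMaps α E) ≤ N ^ 2 * (9 ^ #E * #(evenMaps α E) ^ 2) := calc
    N ^ 2 * #(properMaps α E) = N * (N * #(properMaps α E)) := by ring
    _ ≤ N * ∑ σ : Sym2 α → Bool, signedHomCount E σ ^ 2 :=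
        mul_le_mul_of_nonneg_left (card_properMaps_le_sum_sq E) hN.le
    _ ≤ _ := h.trans_eq (by ring)
  exact_mod_cast le_of_mul_le_mul_left this (by positivity)

end SignedHomCount

section Counting

variable {V α : Type*} [Fintype V] [DecidableEq V] [Fintype α] [DecidableEq α]

lemma descFactorial_le_card_properMaps {E : Finset (Sym2 V)} (hE : ∀ e ∈ E, ¬ e.IsDiag) :
    (Fintype.card α).descFactorial (Fintype.card V) ≤ #(properMaps α E) := by
  rw [← Fintype.card_embedding_eq, ← card_univ]
  refine card_le_card_of_injOn (fun φ : V ↪ α => ⇑φ) (fun φ _ => ?_)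
    fun φ _ ψ _ h => DFunLike.coe_injective h
  simpa [properMaps, Sym2.isDiag_map φ.injective] using hE

lemma card_filter_card_image_le {K : ℕ} (hK : K ≤ Fintype.card α) :
    #{f : V → α | #(univ.image f) ≤ K} ≤ (Fintype.card α).choose K * K ^ Fintype.card V := by
  calc #{f : V → α | #(univ.image f) ≤ K}
      ≤ #((univ.powersetCard K).biUnion fun A => Fintype.piFinset fun _ : V => A) := by
        refine card_le_card fun f hf => ?_
        obtain ⟨A, hfA, hA⟩ := exists_superset_card_eq (mem_filter.1 hf).2 (by simpa using hK)
        simp only [mem_biUnion, mem_powersetCard, Fintype.mem_piFinset]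
        exact ⟨A, ⟨subset_univ A, hA⟩, fun x => hfA (mem_image_of_mem f (mem_univ x))⟩
    _ ≤ ∑ A ∈ univ.powersetCard K, #(Fintype.piFinset fun _ : V => A) := card_biUnion_le
    _ = ∑ A ∈ univ.powersetCard K, K ^ Fintype.card V := sum_congr rfl fun A hA => by
        rw [Fintype.card_piFinset, prod_const, (mem_powersetCard.1 hA).2, card_univ]
    _ = (Fintype.card α).choose K * K ^ Fintype.card V := by
        rw [sum_const, card_powersetCard, card_univ, smul_eq_mul]

/-- The witness is `M = 2^v C + 2v + 1`: as `M ≥ 2v`, `M^v ≤ 2^v (M + 1 - v)^v`, and `M > 2^v C`. -/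
lemma exists_mul_pow_lt_descFactorial (C : ℕ) {v : ℕ} (hv : 0 < v) :
    ∃ m, C * (m + 1) ^ (v - 1) < (m + 1).descFactorial v := by
  refine ⟨2 ^ v * C + 2 * v, ?_⟩
  set M := 2 ^ v * C + 2 * v + 1
  refine lt_of_lt_of_le (Nat.lt_of_mul_lt_mul_left (a := 2 ^ v) ?_)
    (Nat.pow_sub_le_descFactorial M v)
  calc 2 ^ v * (C * M ^ (v - 1)) = 2 ^ v * C * M ^ (v - 1) := by ring
    _ < M * M ^ (v - 1) := Nat.mul_lt_mul_of_pos_right (by omega) (by positivity)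
    _ = M ^ v := by rw [← pow_succ', Nat.sub_add_cancel hv]
    _ ≤ (2 * (M + 1 - v)) ^ v := Nat.pow_le_pow_left (by omega) v
    _ = 2 ^ v * (M + 1 - v) ^ v := mul_pow ..

theorem exists_mem_evenMaps_card_le_two_mul [Nonempty α] {E : Finset (Sym2 V)}
    (hE : ∀ e ∈ E, ¬ e.IsDiag)
    (hα : 9 ^ #E * Fintype.card V ^ (2 * Fintype.card V) * Fintype.card α ^ (Fintype.card V - 1)
      < (Fintype.card α).descFactorial (Fintype.card V))
    (hT : ∀ σ : Sym2 α → Bool, 0 ≤ signedHomCount E σ) :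
    ∃ φ ∈ evenMaps α E, Fintype.card V ≤ 2 * #(univ.image φ) := by
  by_contra! hsmall
  set v := Fintype.card V
  set m := Fintype.card α
  set K := (v - 1) / 2
  have hvm : v ≤ m := by
    by_contra! h
    rw [Nat.descFactorial_eq_zero_iff_lt.2 h] at hα
    omega
  have heven : #(evenMaps α E) ≤ m ^ K * v ^ v := calc
    #(evenMaps α E) ≤ #{f : V → α | #(univ.image f) ≤ K} :=
        card_le_card fun f hf => mem_filter.2 ⟨mem_univ f, by have := hsmall f hf; omega⟩
    _ ≤ m.choose K * K ^ v := card_filter_card_image_le (by omega)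
    _ ≤ m ^ K * v ^ v :=
        Nat.mul_le_mul (Nat.choose_le_pow m K) (Nat.pow_le_pow_left (by omega) v)
  have := calc m.descFactorial v
      ≤ #(properMaps α E) := descFactorial_le_card_properMaps hE
    _ ≤ 9 ^ #E * #(evenMaps α E) ^ 2 := card_properMaps_le E hT
    _ ≤ 9 ^ #E * (m ^ K * v ^ v) ^ 2 := by gcongr
    _ = 9 ^ #E * v ^ (2 * v) * m ^ (2 * K) := by ring
    _ ≤ 9 ^ #E * v ^ (2 * v) * m ^ (v - 1) := by
        gcongr
        · exact Fintype.card_pos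
        · omega
  omega

end Counting

section StepKernel

variable {V : Type*} [Fintype V] [DecidableEq V]

def stepIndex (m : ℕ) (x : UI) : Fin (m + 1) := Fin.clamp ⌊(x : ℝ) * (m + 1)⌋₊ m

lemma measurable_stepIndex (m : ℕ) : Measurable (stepIndex m) :=
  (measurable_from_nat (f := fun n => Fin.clamp n m)).comp
    (measurable_subtype_coe.mul_const _).nat_floor

lemma volume_stepIndex_preimage (m : ℕ) (i : Fin (m + 1)) :
    volume (stepIndex m ⁻¹' {i}) = ENNReal.ofReal (1 / (m + 1)) := by
  have hm : (0 : ℝ) < m + 1 := by positivity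
  have hi : (i : ℝ) + 1 ≤ m + 1 := by exact_mod_cast i.is_lt
  have hlen : ((i : ℝ) + 1) / (m + 1) - i / (m + 1) = 1 / (m + 1) := by ring
  rw [unitInterval.volume_apply]
  apply le_antisymm
  · calc _ ≤ volume (Set.Icc ((i : ℝ) / (m + 1)) ((i + 1) / (m + 1))) := measure_mono ?_
      _ = ENNReal.ofReal (1 / (m + 1)) := by rw [Real.volume_Icc, hlen]
    rintro _ ⟨x, hx, rfl⟩
    have hx : min ⌊(x : ℝ) * (m + 1)⌋₊ m = i := congrArg Fin.val hx
    have hx0 : 0 ≤ (x : ℝ) * (m + 1) := mul_nonneg x.2.1 hm.le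
    rw [Set.mem_Icc, div_le_iff₀ hm, le_div_iff₀ hm]
    constructor
    · exact (Nat.cast_le.2 (hx ▸ min_le_left _ _)).trans (Nat.floor_le hx0)
    · rcases le_total ⌊(x : ℝ) * (m + 1)⌋₊ m with h | h
      · rw [min_eq_left h] at hx
        exact (Nat.lt_floor_add_one _).le.trans (by rw [hx])
      · rw [min_eq_right h] at hx
        calc (x : ℝ) * (m + 1) ≤ 1 * (m + 1) := by gcongr; exact x.2.2
          _ = i + 1 := by rw [← hx]; ring
  · calc ENNReal.ofReal (1 / (m + 1))
          = volume (Set.Ico ((i : ℝ) / (m + 1)) ((i + 1) / (m + 1))) := by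
          rw [Real.volume_Ico, hlen]
      _ ≤ _ := measure_mono ?_
    intro y ⟨hy₁, hy₂⟩
    have hy0 : 0 ≤ y := le_trans (by positivity) hy₁
    have hy1 : y ≤ 1 := hy₂.le.trans ((div_le_one hm).2 hi)
    refine ⟨⟨y, hy0, hy1⟩, Fin.ext ?_, rfl⟩
    have hfloor : ⌊y * (m + 1)⌋₊ = i := by
      rw [Nat.floor_eq_iff (by positivity)]
      exact ⟨(div_le_iff₀ hm).1 hy₁, (lt_div_iff₀ hm).1 hy₂⟩
    simp [stepIndex, Fin.clamp, hfloor, Nat.le_of_lt_succ i.is_lt]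

def stepKernel (m : ℕ) (σ : Sym2 (Fin (m + 1)) → Bool) (x y : UI) : ℝ :=
  signedEdge σ s(stepIndex m x, stepIndex m y)

lemma abs_signedEdge_le_one {α : Type*} [DecidableEq α] (σ : Sym2 α → Bool) (ε : Sym2 α) :
    |signedEdge σ ε| ≤ 1 := by
  unfold signedEdge
  split_ifs
  · norm_num
  · rw [abs_boolSign]

lemma isKernel_stepKernel (m : ℕ) (σ : Sym2 (Fin (m + 1)) → Bool) :
    IsKernel (stepKernel m σ) :=
  ⟨(measurable_of_countable fun z : Fin (m + 1) × Fin (m + 1) => signedEdge σ s(z.1, z.2)).comp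
      ((measurable_stepIndex m).prodMap (measurable_stepIndex m)),
    fun x y => by rw [stepKernel, stepKernel, Sym2.eq_swap],
    1, fun x y => abs_signedEdge_le_one σ _⟩

lemma integral_prod_stepKernel (E : Finset (Sym2 V)) (m : ℕ)
    (σ : Sym2 (Fin (m + 1)) → Bool) :
    ∫ p : V → UI, ∏ e ∈ E, stepKernel m σ (p (Quot.out e).1) (p (Quot.out e).2) =
      (1 / (m + 1) : ℝ) ^ Fintype.card V * signedHomCount E σ := by
  set Φ : (V → UI) → V → Fin (m + 1) := fun p v => stepIndex m (p v)
  have hΦ : Measurable Φ :=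
    measurable_pi_lambda _ fun v => (measurable_stepIndex m).comp (measurable_pi_apply v)
  have hfiber : ∀ f, (volume.map Φ).real {f} = (1 / (m + 1) : ℝ) ^ Fintype.card V := by
    intro f
    have : Φ ⁻¹' {f} = Set.univ.pi fun v => stepIndex m ⁻¹' {f v} := by
      ext p
      simp [Φ, funext_iff]
    rw [Measure.real, Measure.map_apply hΦ (measurableSet_singleton f), this, volume_pi_pi]
    simp only [volume_stepIndex_preimage, prod_const, card_univ, ENNReal.toReal_pow,
      ENNReal.toReal_ofReal (by positivity : (0 : ℝ) ≤ 1 / (m + 1))]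
  calc ∫ p : V → UI, ∏ e ∈ E, stepKernel m σ (p (Quot.out e).1) (p (Quot.out e).2)
      = ∫ p, (fun f => ∏ e ∈ E, signedEdge σ (e.map f)) (Φ p) := by
        congr 1
        ext p
        refine prod_congr rfl fun e _ => ?_
        conv_rhs => rw [← Quot.out_eq e]
        rfl
    _ = ∫ f, ∏ e ∈ E, signedEdge σ (e.map f) ∂(volume.map Φ) :=
        (integral_map hΦ.aemeasurable (measurable_of_countable
          fun f : V → Fin (m + 1) => ∏ e ∈ E, signedEdge σ (e.map f)).aestronglyMeasurable).symm
    _ = (1 / (m + 1) : ℝ) ^ Fintype.card V * signedHomCount E σ := by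
        rw [integral_fintype Integrable.of_finite, signedHomCount, mul_sum]
        simp only [hfiber, smul_eq_mul]

end StepKernel

open scoped Classical in
lemma Positive.signedHomCount_nonneg {V : Type} [Fintype V] {G : SimpleGraph V}
    (hG : Positive G) (m : ℕ) (σ : Sym2 (Fin (m + 1)) → Bool) :
    0 ≤ signedHomCount G.edgeFinset σ := by
  have h := hG _ (isKernel_stepKernel m σ)
  rw [homDensity, integral_prod_stepKernel] at h
  exact nonneg_of_mul_nonneg_right h (by positivity)

lemma Finset.even_card_filter_comp {ι β γ : Type*} [DecidableEq β] [DecidableEq γ]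
    (s : Finset ι) {g : ι → β} (h : β → γ) (hg : ∀ b, Even #{x ∈ s | g x = b}) (c : γ) :
    Even #{x ∈ s | h (g x) = c} := by
  rw [card_eq_sum_card_image g]
  refine even_sum _ fun b hb => ?_
  have hbc : h b = c := by
    obtain ⟨x, hx, rfl⟩ := mem_image.1 hb
    exact (mem_filter.1 hx).2
  rw [filter_filter, filter_congr fun y _ => and_iff_right_of_imp fun hy => hy ▸ hbc]
  exact hg b

lemma mem_evenMaps {V α : Type*} [Fintype V] [DecidableEq V] [Fintype α] [DecidableEq α]
    {E : Finset (Sym2 V)} {φ : V → α} :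
    φ ∈ evenMaps α E ↔ (∀ e ∈ E, ¬ (e.map φ).IsDiag) ∧ ∀ δ, Even #{e ∈ E | e.map φ = δ} := by
  rw [evenMaps, mem_filter, properMaps, mem_filter, oddEdges, filter_eq_empty_iff]
  simp only [mem_univ, true_and, true_implies, Nat.not_odd_iff_even, edgeMult]

lemma exists_isEvenHom_of_mem_evenMaps {V α : Type} [Fintype V] [DecidableEq V] [Nonempty V]
    [Fintype α] [DecidableEq α] {G : SimpleGraph V} [Fintype G.edgeSet] {φ : V → α}
    (hφ : φ ∈ evenMaps α G.edgeFinset) {n : ℕ} (hn : Fintype.card V ≤ n) :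
    ∃ f : G →g (⊤ : SimpleGraph (Fin n)), IsEvenHom f ∧ #(univ.image f) = #(univ.image φ) := by
  have : Nonempty (Fin n) := ⟨⟨0, Fintype.card_pos.trans_le hn⟩⟩
  obtain ⟨ψ, -, hψ⟩ := (Set.finite_range φ).exists_injOn_of_encard_le
    (t := (Set.univ : Set (Fin n))) <| by
      rw [← Set.image_univ, Set.encard_univ, ENat.card_eq_coe_fintype_card, Fintype.card_fin]
      exact (Set.encard_image_le φ _).trans (by simpa using hn)
  obtain ⟨hproper, heven⟩ := mem_evenMaps.1 hφ
  refine ⟨⟨ψ ∘ φ, fun {a b} hab => ?_⟩, fun ε _ => ?_, ?_⟩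
  · exact hψ.ne (Set.mem_range_self a) (Set.mem_range_self b)
      (hproper s(a, b) (G.mem_edgeFinset.2 hab))
  · convert even_card_filter_comp _ (Sym2.map ψ) heven ε using 4
    rw [Sym2.map_map]
    rfl
  · change #(univ.image (ψ ∘ φ)) = _
    rw [← image_image, card_image_of_injOn (hψ.mono (by simp))]

theorem positive_implies_even_hom_large_image {V : Type} [Fintype V] (G : SimpleGraph V)
    (h : Positive G) :
    ∀ n : ℕ, Fintype.card V ≤ n →
      ∃ f : G →g (⊤ : SimpleGraph (Fin n)), IsEvenHom f ∧
        Fintype.card V ≤ 2 * (Finset.univ.image ⇑f).card := by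
  classical
  intro n hn
  rcases isEmpty_or_nonempty V with hV | hV
  · exact ⟨⟨isEmptyElim, fun {a} => isEmptyElim a⟩,
      fun e _ => by simp [eq_empty_of_isEmpty G.edgeFinset], by simp⟩
  obtain ⟨m, hm⟩ := exists_mul_pow_lt_descFactorial
    (9 ^ #G.edgeFinset * Fintype.card V ^ (2 * Fintype.card V)) (Fintype.card_pos (α := V))
  obtain ⟨φ, hφ, hlarge⟩ := exists_mem_evenMaps_card_le_two_mul (α := Fin (m + 1))
    (fun e he => G.not_isDiag_of_mem_edgeSet (G.mem_edgeFinset.1 he)) (by simpa using hm)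
    (h.signedHomCount_nonneg m)
  obtain ⟨f, hf, himage⟩ := exists_isEvenHom_of_mem_evenMaps hφ hn
  exact ⟨f, hf, himage ▸ hlarge⟩
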